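/- arXiv:math/0501418 — 3 statements merged into one kernel-verified Lean document; each statement's English description precedes it below -/
import Mathlib

section
/- Let A and B be lattices, let a, a' ∈ A and b, b' ∈ B. Then: (a) a ∘ b ⊆ a' □ b' if and only if a ≤ a' or b ≤ b'; (b) (a ∘ b) ∩ (a' ∘ b') = (a ∧ a') ∘ (b ∧ b'); (c) (a □ b) ∩ (a' ∘ b') = ((a ∧ a') ∘ b') ∪ (a' ∘ (b ∧ b')); (d) (a □ b) ∩ (a' □ b') = ((a ∧ a') □ (b ∧ b')) ∪ (a ∘ b') ∪ (a' ∘ b); (e) a □ b ⊆ a' □ b' if and only if either every element of A is ≤ a', or every element of B is ≤ b', or (a ≤ a' and b ≤ b'). -/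
/-- The pure box `a □ b = {⟨x,y⟩ : x ≤ a or y ≤ b}`. -/
def pureBox {A B : Type*} [Lattice A] [Lattice B] (a : A) (b : B) : Set (A × B) :=
  {p : A × B | p.1 ≤ a ∨ p.2 ≤ b}

/-- `a ∘ b = {⟨x,y⟩ : x ≤ a and y ≤ b}`. -/
def pureCirc {A B : Type*} [Lattice A] [Lattice B] (a : A) (b : B) : Set (A × B) :=
  {p : A × B | p.1 ≤ a ∧ p.2 ≤ b}

/-- The box product `A □ B`: all finite (nonempty) intersections of pure boxes. -/
def BoxProd (A B : Type*) [Lattice A] [Lattice B] : Set (Set (A × B)) :=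
  {H | ∃ (n : ℕ) (a : Fin (n + 1) → A) (b : Fin (n + 1) → B),
    H = ⋂ i, pureBox (a i) (b i)}

/-- `A ⊡ B`: all finite unions of pure boxes (at least one) and pure circles. -/
def BoxDot (A B : Type*) [Lattice A] [Lattice B] : Set (Set (A × B)) :=
  {H | ∃ (m n : ℕ) (a : Fin (m + 1) → A) (b : Fin (m + 1) → B)
      (c : Fin n → A) (d : Fin n → B),
    H = (⋃ i, pureBox (a i) (b i)) ∪ ⋃ j, pureCirc (c j) (d j)}

/-- The box closure of a subset of `A × B`: intersection of all pure boxes containing it. -/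
def BoxCl {A B : Type*} [Lattice A] [Lattice B] (X : Set (A × B)) : Set (A × B) :=
  ⋂ (a : A) (b : B) (_ : X ⊆ pureBox a b), pureBox a b

/-- The pure lattice tensor `a ⊠ b = (a ∘ b) ∪ ⊥_{A,B}`, where `⊥_{A,B}` consists of
the pairs one of whose coordinates is a least element. -/
def pureTens {A B : Type*} [Lattice A] [Lattice B] (a : A) (b : B) : Set (A × B) :=
  pureCirc a b ∪ {p : A × B | IsBot p.1 ∨ IsBot p.2}

/-- A subset of `A × B` is confined if it is contained in some pure lattice tensor. -/
def Confined {A B : Type*} [Lattice A] [Lattice B] (X : Set (A × B)) : Prop :=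
  ∃ (a : A) (b : B), X ⊆ pureTens a b

/-- The lattice tensor product `A ⊠ B`: all confined elements of `A □ B`. -/
def LatTens (A B : Type*) [Lattice A] [Lattice B] : Set (Set (A × B)) :=
  {H | H ∈ BoxProd A B ∧ Confined H}

/-- `X^△ = {⟨a,b⟩ : ⟨x,y⟩ ◁ ⟨a,b⟩ for all ⟨x,y⟩ ∈ X}` where `⟨x,y⟩ ◁ ⟨a,b⟩` iff
`x ≤ a` or `y ≤ b`. -/
def trUp {A B : Type*} [Lattice A] [Lattice B] (X : Set (A × B)) : Set (A × B) :=
  {p : A × B | ∀ q ∈ X, q.1 ≤ p.1 ∨ q.2 ≤ p.2}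

/-- `X^▽ = {⟨a,b⟩ : ⟨a,b⟩ ◁ ⟨x,y⟩ for all ⟨x,y⟩ ∈ X}`. -/
def trDown {A B : Type*} [Lattice A] [Lattice B] (X : Set (A × B)) : Set (A × B) :=
  {p : A × B | ∀ q ∈ X, p.1 ≤ q.1 ∨ p.2 ≤ q.2}

section PureBoxCirc

variable {A B : Type*} [Lattice A] [Lattice B]

@[simp]
theorem mem_pureBox {a : A} {b : B} {p : A × B} : p ∈ pureBox a b ↔ p.1 ≤ a ∨ p.2 ≤ b :=
  Iff.rfl

@[simp]
theorem mem_pureCirc {a : A} {b : B} {p : A × B} : p ∈ pureCirc a b ↔ p.1 ≤ a ∧ p.2 ≤ b :=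
  Iff.rfl

theorem pureCirc_subset_pureBox_iff {a a' : A} {b b' : B} :
    pureCirc a b ⊆ pureBox a' b' ↔ a ≤ a' ∨ b ≤ b' := by
  refine ⟨fun h ↦ h (show (a, b) ∈ pureCirc a b from ⟨le_rfl, le_rfl⟩), ?_⟩
  rintro (h | h) p ⟨hx, hy⟩
  · exact Or.inl (hx.trans h)
  · exact Or.inr (hy.trans h)

theorem pureCirc_inter_pureCirc (a a' : A) (b b' : B) :
    pureCirc a b ∩ pureCirc a' b' = pureCirc (a ⊓ a') (b ⊓ b') := by
  ext p
  simp only [Set.mem_inter_iff, mem_pureCirc, le_inf_iff]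
  tauto

theorem pureBox_inter_pureCirc (a a' : A) (b b' : B) :
    pureBox a b ∩ pureCirc a' b' = pureCirc (a ⊓ a') b' ∪ pureCirc a' (b ⊓ b') := by
  ext p
  simp only [Set.mem_inter_iff, Set.mem_union, mem_pureBox, mem_pureCirc, le_inf_iff]
  tauto

theorem pureBox_inter_pureBox (a a' : A) (b b' : B) :
    pureBox a b ∩ pureBox a' b' = pureBox (a ⊓ a') (b ⊓ b') ∪ pureCirc a b' ∪ pureCirc a' b := by
  ext p
  simp only [Set.mem_inter_iff, Set.mem_union, mem_pureBox, mem_pureCirc, le_inf_iff]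
  tauto

theorem pureBox_subset_pureBox_iff {a a' : A} {b b' : B} :
    pureBox a b ⊆ pureBox a' b' ↔ (∀ x : A, x ≤ a') ∨ (∀ y : B, y ≤ b') ∨ (a ≤ a' ∧ b ≤ b') := by
  constructor
  · intro h
    by_contra! hne
    obtain ⟨⟨x₀, hx₀⟩, ⟨y₀, hy₀⟩, hab⟩ := hne
    have hb : b ≤ b' := (h (show (x₀, b) ∈ pureBox a b from Or.inr le_rfl)).resolve_left hx₀
    have ha : a ≤ a' := (h (show (a, y₀) ∈ pureBox a b from Or.inl le_rfl)).resolve_right hy₀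
    exact hab ha hb
  · rintro (h | h | ⟨ha, hb⟩) p hp
    · exact Or.inl (h p.1)
    · exact Or.inr (h p.2)
    · exact hp.imp (·.trans ha) (·.trans hb)

end PureBoxCirc

/-- Lemma 2.4 of the paper: basic identities for pure boxes and pure circles. -/
theorem stmt_0 {A B : Type*} [Lattice A] [Lattice B] (a a' : A) (b b' : B) :
    (pureCirc a b ⊆ pureBox a' b' ↔ a ≤ a' ∨ b ≤ b') ∧
    (pureCirc a b ∩ pureCirc a' b' = pureCirc (a ⊓ a') (b ⊓ b')) ∧
    (pureBox a b ∩ pureCirc a' b' = pureCirc (a ⊓ a') b' ∪ pureCirc a' (b ⊓ b')) ∧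
    (pureBox a b ∩ pureBox a' b' =
      pureBox (a ⊓ a') (b ⊓ b') ∪ pureCirc a b' ∪ pureCirc a' b) ∧
    (pureBox a b ⊆ pureBox a' b' ↔
      (∀ x : A, x ≤ a') ∨ (∀ y : B, y ≤ b') ∨ (a ≤ a' ∧ b ≤ b')) := by
  exact ⟨pureCirc_subset_pureBox_iff, pureCirc_inter_pureCirc a a' b b',
    pureBox_inter_pureCirc a a' b b', pureBox_inter_pureBox a a' b b', pureBox_subset_pureBox_iff⟩
end

section
/- Let A and B be lattices. Then A □ B is a closure system in A ⊡ B: for every H ∈ A ⊡ B there is a least element H̄ of A □ B containing H. Explicitly, if H = ⋃_{i<m}(a_i □ b_i) ∪ ⋃_{j<n}(c_j ∘ d_j) with m > 0 and n ≥ 0, then H̄ = ⋂_{X ⊆ n} ((ā ∨ c^(X)) □ (b̄ ∨ d^(n−X))), where ā = ⋁_{i<m} a_i, b̄ = ⋁_{i<m} b_i, c^(X) = ⋁_{j∈X} c_j, d^(n−X) = ⋁_{j∈n−X} d_j, with the convention that ā ∨ c^(∅) = ā and b̄ ∨ d^(∅) = b̄. -/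
/-- `x ∨ ⋁_{j ∈ X} c j`, with the convention that the value is `x` when `X = ∅`. -/
def joinWith {L : Type*} [Lattice L] {ι : Type*} (x : L) (c : ι → L) (X : Finset ι) : L :=
  if h : X.Nonempty then x ⊔ X.sup' h c else x

/-!
If `u, v` are not top elements, then `a □ b ⊆ u □ v` forces `a ≤ u` and `b ≤ v` (test the points
`⟨a, y⟩` and `⟨x, b⟩` with `x ≰ u`, `y ≰ v`), and `c ∘ d ⊆ u □ v` forces `c ≤ u` or `d ≤ v`. Hence a
pure box containing `H` lies above `ā`, `b̄`, and the box of the formula indexed by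
`X = {j | c_j ≤ u}` is contained in it; pure boxes with a top coordinate are everything. Conversely
every `c_j ∘ d_j` lies in every box of the formula, as `j ∈ X` or `j ∈ n − X`. Since an element of
`A □ B` is an intersection of pure boxes, the formula gives the least one containing `H`.
-/

section BoxClosure

variable {A B : Type*} [Lattice A] [Lattice B]

lemma le_joinWith {L ι : Type*} [Lattice L] (x : L) (c : ι → L) (X : Finset ι) :
    x ≤ joinWith x c X := by
  unfold joinWith
  split
  · exact le_sup_left
  · exact le_rfl

lemma le_joinWith_of_mem {L ι : Type*} [Lattice L] (x : L) (c : ι → L) {X : Finset ι} {j : ι}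
    (hj : j ∈ X) : c j ≤ joinWith x c X := by
  rw [joinWith, dif_pos ⟨j, hj⟩]
  exact (Finset.le_sup' c hj).trans le_sup_right

lemma joinWith_le {L ι : Type*} [Lattice L] {x u : L} {c : ι → L} {X : Finset ι}
    (hx : x ≤ u) (hc : ∀ j ∈ X, c j ≤ u) : joinWith x c X ≤ u := by
  unfold joinWith
  split
  · next h => exact sup_le hx (Finset.sup'_le h c hc)
  · exact hx

lemma iInter_pureBox_mem_boxProd {ι : Type*} [Fintype ι] [Nonempty ι] (a : ι → A) (b : ι → B) :
    (⋂ i, pureBox (a i) (b i)) ∈ BoxProd A B := by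
  obtain ⟨k, hk⟩ := Nat.exists_eq_succ_of_ne_zero (Fintype.card_ne_zero (α := ι))
  let e : ι ≃ Fin (k + 1) := Fintype.equivFinOfCardEq hk
  exact ⟨k, a ∘ e.symm, b ∘ e.symm,
    (e.symm.surjective.iInter_comp fun i => pureBox (a i) (b i)).symm⟩

lemma le_and_le_of_pureBox_subset_pureBox {a u : A} {b v : B} (h : pureBox a b ⊆ pureBox u v)
    (hu : ¬IsTop u) (hv : ¬IsTop v) : a ≤ u ∧ b ≤ v := by
  obtain ⟨x, hx⟩ := not_forall.1 hu
  obtain ⟨y, hy⟩ := not_forall.1 hv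
  have hxb : x ≤ u ∨ b ≤ v := h (Or.inr le_rfl : (x, b) ∈ pureBox a b)
  have hay : a ≤ u ∨ y ≤ v := h (Or.inl le_rfl : (a, y) ∈ pureBox a b)
  exact ⟨hay.resolve_right hy, hxb.resolve_left hx⟩

lemma le_or_le_of_pureCirc_subset_pureBox {c u : A} {d v : B} (h : pureCirc c d ⊆ pureBox u v) :
    c ≤ u ∨ d ≤ v :=
  h (⟨le_rfl, le_rfl⟩ : (c, d) ∈ pureCirc c d)

lemma pureBox_subset_pureBox_joinWith {ι : Type*} {a x : A} {b y : B} (c : ι → A) (d : ι → B)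
    (X Y : Finset ι) (hx : a ≤ x) (hy : b ≤ y) :
    pureBox a b ⊆ pureBox (joinWith x c X) (joinWith y d Y) :=
  fun _ hp => hp.imp (·.trans (hx.trans (le_joinWith x c X)))
    (·.trans (hy.trans (le_joinWith y d Y)))

lemma pureCirc_subset_pureBox_joinWith_compl {κ : Type*} [Fintype κ] [DecidableEq κ]
    (x : A) (y : B) (c : κ → A) (d : κ → B) (X : Finset κ) (j : κ) :
    pureCirc (c j) (d j) ⊆ pureBox (joinWith x c X) (joinWith y d Xᶜ) := by
  rintro p ⟨hpc, hpd⟩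
  by_cases hj : j ∈ X
  · exact Or.inl (hpc.trans (le_joinWith_of_mem x c hj))
  · exact Or.inr (hpd.trans (le_joinWith_of_mem y d (Finset.mem_compl.2 hj)))

lemma iInter_pureBox_joinWith_subset_pureBox {κ : Type*} [Fintype κ] [DecidableEq κ]
    {x u : A} {y v : B} {c : κ → A} {d : κ → B} (hx : x ≤ u) (hy : y ≤ v)
    (hcd : ∀ j, c j ≤ u ∨ d j ≤ v) :
    (⋂ X : Finset κ, pureBox (joinWith x c X) (joinWith y d Xᶜ)) ⊆ pureBox u v := by
  classical
  intro p hp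
  rcases Set.mem_iInter.1 hp ({j | c j ≤ u} : Finset κ) with hpx | hpy
  · exact Or.inl (hpx.trans (joinWith_le hx fun j hj => (Finset.mem_filter.1 hj).2))
  · refine Or.inr (hpy.trans (joinWith_le hy fun j hj => (hcd j).resolve_left ?_))
    simpa using hj

variable {ι κ : Type*} [Fintype ι] [Nonempty ι] [Fintype κ] [DecidableEq κ]

lemma iInter_pureBox_joinWith_subset_of_subset {a : ι → A} {b : ι → B} {c : κ → A} {d : κ → B}
    {u : A} {v : B} (h : (⋃ i, pureBox (a i) (b i)) ∪ ⋃ j, pureCirc (c j) (d j) ⊆ pureBox u v) :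
    (⋂ X : Finset κ, pureBox
        (joinWith (Finset.univ.sup' Finset.univ_nonempty a) c X)
        (joinWith (Finset.univ.sup' Finset.univ_nonempty b) d Xᶜ)) ⊆ pureBox u v := by
  by_cases hu : IsTop u
  · exact fun p _ => Or.inl (hu p.1)
  by_cases hv : IsTop v
  · exact fun p _ => Or.inr (hv p.2)
  obtain ⟨hab, hcd⟩ := Set.union_subset_iff.1 h
  rw [Set.iUnion_subset_iff] at hab hcd
  have hle i := le_and_le_of_pureBox_subset_pureBox (hab i) hu hv
  refine iInter_pureBox_joinWith_subset_pureBox ?_ ?_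
    fun j => le_or_le_of_pureCirc_subset_pureBox (hcd j)
  · exact Finset.sup'_le _ a fun i _ => (hle i).1
  · exact Finset.sup'_le _ b fun i _ => (hle i).2

theorem isLeast_iInter_pureBox_joinWith (a : ι → A) (b : ι → B) (c : κ → A) (d : κ → B) :
    IsLeast {K | K ∈ BoxProd A B ∧ (⋃ i, pureBox (a i) (b i)) ∪ ⋃ j, pureCirc (c j) (d j) ⊆ K}
      (⋂ X : Finset κ, pureBox
        (joinWith (Finset.univ.sup' Finset.univ_nonempty a) c X)
        (joinWith (Finset.univ.sup' Finset.univ_nonempty b) d Xᶜ)) := by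
  refine ⟨⟨iInter_pureBox_mem_boxProd _ _, Set.union_subset ?_ ?_⟩, ?_⟩
  · exact Set.iUnion_subset fun i => Set.subset_iInter fun X =>
      pureBox_subset_pureBox_joinWith c d X Xᶜ
        (Finset.le_sup' a (Finset.mem_univ i)) (Finset.le_sup' b (Finset.mem_univ i))
  · exact Set.iUnion_subset fun j => Set.subset_iInter fun X =>
      pureCirc_subset_pureBox_joinWith_compl _ _ c d X j
  · rintro K ⟨⟨N, u, v, rfl⟩, hK⟩
    exact Set.subset_iInter fun k =>
      iInter_pureBox_joinWith_subset_of_subset (hK.trans (Set.iInter_subset _ k))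

end BoxClosure

/-- `A □ B` is a closure system in `A ⊡ B`, with the explicit formula for the closure. -/
theorem stmt_2 {A B : Type*} [Lattice A] [Lattice B] :
    (∀ H ∈ BoxDot A B, ∃ Hbar ∈ BoxProd A B, H ⊆ Hbar ∧
      ∀ K ∈ BoxProd A B, H ⊆ K → Hbar ⊆ K) ∧
    ∀ (m n : ℕ) (a : Fin (m + 1) → A) (b : Fin (m + 1) → B)
      (c : Fin n → A) (d : Fin n → B),
      (⋂ X : Finset (Fin n), pureBox
          (joinWith (Finset.univ.sup' Finset.univ_nonempty a) c X)
          (joinWith (Finset.univ.sup' Finset.univ_nonempty b) d Xᶜ)) ∈ BoxProd A B ∧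
      ((⋃ i, pureBox (a i) (b i)) ∪ ⋃ j, pureCirc (c j) (d j)) ⊆
        (⋂ X : Finset (Fin n), pureBox
          (joinWith (Finset.univ.sup' Finset.univ_nonempty a) c X)
          (joinWith (Finset.univ.sup' Finset.univ_nonempty b) d Xᶜ)) ∧
      ∀ K ∈ BoxProd A B,
        ((⋃ i, pureBox (a i) (b i)) ∪ ⋃ j, pureCirc (c j) (d j)) ⊆ K →
        (⋂ X : Finset (Fin n), pureBox
          (joinWith (Finset.univ.sup' Finset.univ_nonempty a) c X)
          (joinWith (Finset.univ.sup' Finset.univ_nonempty b) d Xᶜ)) ⊆ K := by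
  have closure_formula (m n : ℕ) (a : Fin (m + 1) → A) (b : Fin (m + 1) → B)
      (c : Fin n → A) (d : Fin n → B) := isLeast_iInter_pureBox_joinWith a b c d
  refine ⟨?_, fun m n a b c d => ?_⟩
  · rintro H ⟨m, n, a, b, c, d, rfl⟩
    obtain ⟨⟨hmem, hsub⟩, hleast⟩ := closure_formula m n a b c d
    exact ⟨_, hmem, hsub, fun K hK hHK => hleast ⟨hK, hHK⟩⟩
  · obtain ⟨⟨hmem, hsub⟩, hleast⟩ := closure_formula m n a b c d
    exact ⟨hmem, hsub, fun K hK hHK => hleast ⟨hK, hHK⟩⟩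
end

section
/- Let A and B be lattices with least elements 0_A and 0_B. Then the elements of A ⊠ B are exactly the finite intersections H = ⋂_{i<n}(a_i □ b_i) with n > 0, ⟨a_i,b_i⟩ ∈ A × B, satisfying ⋀_{i<n} a_i = 0_A and ⋀_{i<n} b_i = 0_B. Furthermore, every element of A ⊠ B can be written as a finite union ⋃_{i<n}(a_i ⊠ b_i) of pure lattice tensors, and conversely the box closure of any finite union of pure lattice tensors belongs to A ⊠ B. -/
/-! A point `(x, y)` lies in `⋂ i, a i □ b i` iff for some set `S` of indices, `x ≤ a i` for
`i ∈ S` and `y ≤ b i` for `i ∉ S`. When the meets of the `a i` and of the `b i` are `⊥`, the cases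
`S = ∅` and `S = univ` force a zero coordinate, so the intersection is the union of the tensors
`(⋀_{i ∈ S} a i) ⊠ (⋀_{i ∉ S} b i)`, and it is confined by `(⋁ a i) ⊠ (⋁ b i)`. Conversely
`c ⊠ d = (c □ ⊥) ∩ (⊥ □ d)`, so adjoining these two boxes to a confined intersection of boxes does
not change it and makes both meets `⊥`. Dually, `u □ v` contains `⋃ i, a i ⊠ b i` iff `a i ≤ u` or
`b i ≤ v` for each `i`, so the box closure is `⋂_S (⋁_{i ∈ S} a i) □ (⋁_{i ∉ S} b i)`, where
`S = ∅` and `S = univ` contribute `⊥` to the meets. -/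

theorem Finite.exists_fin_succ_surjective (κ : Type*) [Finite κ] [Nonempty κ] :
    ∃ (n : ℕ) (e : Fin (n + 1) → κ), Function.Surjective e := by
  obtain ⟨n, ⟨e⟩⟩ := Finite.exists_equiv_fin κ
  cases n with
  | zero => exact (e (Classical.arbitrary κ)).elim0
  | succ n => exact ⟨n, e.symm, e.symm.surjective⟩

namespace Finset

variable {ι α : Type*} [Lattice α] [OrderBot α]

def infOrBot (s : Finset ι) (f : ι → α) : α :=
  if h : s.Nonempty then s.inf' h f else ⊥

theorem infOrBot_le {s : Finset ι} (f : ι → α) {i : ι} (hi : i ∈ s) : s.infOrBot f ≤ f i := by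
  rw [infOrBot, dif_pos ⟨i, hi⟩]
  exact inf'_le f hi

theorem le_infOrBot {s : Finset ι} (hs : s.Nonempty) {f : ι → α} {x : α}
    (h : ∀ i ∈ s, x ≤ f i) : x ≤ s.infOrBot f := by
  rw [infOrBot, dif_pos hs]
  exact le_inf' hs f h

end Finset

section GLB

variable {ι α : Type*} [Lattice α]

theorem isGLB_range_univ_inf' [Fintype ι] [Nonempty ι] (f : ι → α) :
    IsGLB (Set.range f) (Finset.univ.inf' Finset.univ_nonempty f) :=
  ⟨Set.forall_mem_range.2 fun i => Finset.inf'_le f (Finset.mem_univ i),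
    fun _ hx => Finset.le_inf' _ _ fun i _ => hx (Set.mem_range_self i)⟩

variable [OrderBot α]

theorem univ_inf'_eq_bot_iff [Fintype ι] [Nonempty ι] (f : ι → α) :
    Finset.univ.inf' Finset.univ_nonempty f = ⊥ ↔ IsGLB (Set.range f) ⊥ :=
  ⟨fun h => h ▸ isGLB_range_univ_inf' f, (isGLB_range_univ_inf' f).unique⟩

theorem isGLB_range_of_apply_eq_bot {f : ι → α} (i : ι) (hi : f i = ⊥) :
    IsGLB (Set.range f) ⊥ :=
  (isLeast_bot_iff.2 (Set.mem_range.2 ⟨i, hi⟩)).isGLB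

theorem IsGLB.isBot_of_mem_lowerBounds {s : Set α} (hs : IsGLB s ⊥) {x : α}
    (hx : x ∈ lowerBounds s) : IsBot x :=
  fun _ => (hs.2 hx).trans bot_le

end GLB

section Lattice

variable {A B : Type*} [Lattice A] [Lattice B]

theorem pureTens_subset_pureBox_iff {a u : A} {b v : B} :
    pureTens a b ⊆ pureBox u v ↔ a ≤ u ∨ b ≤ v := by
  refine ⟨fun h => h (show (a, b) ∈ pureTens a b from Or.inl ⟨le_rfl, le_rfl⟩), ?_⟩
  rintro h p (⟨hpa, hpb⟩ | hp | hp)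
  · exact h.imp hpa.trans hpb.trans
  · exact Or.inl (hp u)
  · exact Or.inr (hp v)

theorem mem_boxCl_iff {X : Set (A × B)} {p : A × B} :
    p ∈ BoxCl X ↔ ∀ u v, X ⊆ pureBox u v → p ∈ pureBox u v := by
  simp only [BoxCl, Set.mem_iInter]

theorem exists_fin_iUnion_pureTens_eq {κ : Type*} [Finite κ] (a : κ → A) (b : κ → B) :
    ∃ (n : ℕ) (a' : Fin n → A) (b' : Fin n → B),
      ⋃ k, pureTens (a k) (b k) = ⋃ i, pureTens (a' i) (b' i) := by
  obtain ⟨n, ⟨e⟩⟩ := Finite.exists_equiv_fin κ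
  exact ⟨n, a ∘ e.symm, b ∘ e.symm,
    (e.symm.surjective.iUnion_comp fun k => pureTens (a k) (b k)).symm⟩

end Lattice

section OrderBot

variable {A B : Type*} [Lattice A] [OrderBot A] [Lattice B] [OrderBot B] {ι : Type*}

theorem pureTens_eq_pureBox_inter_pureBox (a : A) (b : B) :
    pureTens a b = pureBox a ⊥ ∩ pureBox ⊥ b := by
  ext ⟨x, y⟩
  simp only [pureTens, pureCirc, pureBox, isBot_iff_eq_bot, le_bot_iff, Set.mem_union,
    Set.mem_inter_iff, Set.mem_ofPred_eq]
  constructor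
  · rintro (⟨hx, hy⟩ | rfl | rfl) <;> simp [*]
  · rintro ⟨hx | rfl, rfl | hy⟩ <;> simp [*]

theorem iInter_pureBox_subset_pureTens [Fintype ι] {a : ι → A} {b : ι → B}
    (ha : IsGLB (Set.range a) ⊥) (hb : IsGLB (Set.range b) ⊥) :
    ⋂ i, pureBox (a i) (b i) ⊆ pureTens (Finset.univ.sup a) (Finset.univ.sup b) := by
  intro p hp
  have hp : ∀ i, p.1 ≤ a i ∨ p.2 ≤ b i := Set.mem_iInter.1 hp
  by_cases h1 : ∀ i, p.1 ≤ a i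
  · exact Or.inr (Or.inl (ha.isBot_of_mem_lowerBounds (Set.forall_mem_range.2 h1)))
  by_cases h2 : ∀ i, p.2 ≤ b i
  · exact Or.inr (Or.inr (hb.isBot_of_mem_lowerBounds (Set.forall_mem_range.2 h2)))
  push Not at h1 h2
  obtain ⟨i, hi⟩ := h1
  obtain ⟨j, hj⟩ := h2
  exact Or.inl ⟨((hp j).resolve_right hj).trans (Finset.le_sup (Finset.mem_univ j)),
    ((hp i).resolve_left hi).trans (Finset.le_sup (Finset.mem_univ i))⟩

theorem iInter_pureBox_eq_iUnion_pureTens [Fintype ι] [DecidableEq ι] {a : ι → A} {b : ι → B}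
    (ha : IsGLB (Set.range a) ⊥) (hb : IsGLB (Set.range b) ⊥) :
    ⋂ i, pureBox (a i) (b i) = ⋃ s : Finset ι, pureTens (s.infOrBot a) (sᶜ.infOrBot b) := by
  refine subset_antisymm (fun p hp => ?_) (Set.iUnion_subset fun s => Set.subset_iInter fun i => ?_)
  · have hp : ∀ i, p.1 ≤ a i ∨ p.2 ≤ b i := Set.mem_iInter.1 hp
    refine Set.mem_iUnion.2 ?_
    by_cases h1 : ∀ i, p.1 ≤ a i
    · exact ⟨∅, Or.inr (Or.inl (ha.isBot_of_mem_lowerBounds (Set.forall_mem_range.2 h1)))⟩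
    by_cases h2 : ∀ i, p.2 ≤ b i
    · exact ⟨∅, Or.inr (Or.inr (hb.isBot_of_mem_lowerBounds (Set.forall_mem_range.2 h2)))⟩
    push Not at h1 h2
    classical
    let s := Finset.univ.filter fun i => p.1 ≤ a i
    obtain ⟨i, hi⟩ := h1
    obtain ⟨j, hj⟩ := h2
    have hs : s.Nonempty := ⟨j, by simpa [s] using (hp j).resolve_right hj⟩
    have hsc : sᶜ.Nonempty := ⟨i, by simpa [s] using hi⟩
    refine ⟨s, Or.inl ⟨Finset.le_infOrBot hs fun k hk => by simpa [s] using hk,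
      Finset.le_infOrBot hsc fun k hk => (hp k).resolve_left (by simpa [s] using hk)⟩⟩
  · rw [pureTens_subset_pureBox_iff]
    by_cases hi : i ∈ s
    · exact Or.inl (Finset.infOrBot_le a hi)
    · exact Or.inr (Finset.infOrBot_le b (Finset.mem_compl.2 hi))

theorem boxCl_iUnion_pureTens [Fintype ι] [DecidableEq ι] (a : ι → A) (b : ι → B) :
    BoxCl (⋃ i, pureTens (a i) (b i)) = ⋂ s : Finset ι, pureBox (s.sup a) (sᶜ.sup b) := by
  have hsub : ∀ u v, ⋃ i, pureTens (a i) (b i) ⊆ pureBox u v ↔ ∀ i, a i ≤ u ∨ b i ≤ v := by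
    simp only [Set.iUnion_subset_iff, pureTens_subset_pureBox_iff, implies_true]
  ext p
  simp only [mem_boxCl_iff, hsub, Set.mem_iInter]
  constructor
  · intro hp s
    refine hp _ _ fun i => ?_
    by_cases hi : i ∈ s
    · exact Or.inl (Finset.le_sup hi)
    · exact Or.inr (Finset.le_sup (Finset.mem_compl.2 hi))
  · intro hp u v huv
    classical
    let s := Finset.univ.filter fun i => a i ≤ u
    have hu : s.sup a ≤ u := Finset.sup_le fun i hi => by simpa [s] using hi
    have hv : sᶜ.sup b ≤ v := Finset.sup_le fun i hi => (huv i).resolve_left (by simpa [s] using hi)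
    exact (hp s).imp (·.trans hu) (·.trans hv)

theorem exists_fin_iInter_pureBox_eq {κ : Type*} [Finite κ] [Nonempty κ] {a : κ → A} {b : κ → B}
    (ha : IsGLB (Set.range a) ⊥) (hb : IsGLB (Set.range b) ⊥) :
    ∃ (n : ℕ) (a' : Fin (n + 1) → A) (b' : Fin (n + 1) → B),
      ⋂ k, pureBox (a k) (b k) = ⋂ i, pureBox (a' i) (b' i) ∧
      Finset.univ.inf' Finset.univ_nonempty a' = ⊥ ∧
      Finset.univ.inf' Finset.univ_nonempty b' = ⊥ := by
  obtain ⟨n, e, he⟩ := Finite.exists_fin_succ_surjective κ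
  refine ⟨n, a ∘ e, b ∘ e, (he.iInter_comp fun k => pureBox (a k) (b k)).symm, ?_, ?_⟩
  · rwa [univ_inf'_eq_bot_iff, he.range_comp]
  · rwa [univ_inf'_eq_bot_iff, he.range_comp]

theorem mem_latTens_iff {H : Set (A × B)} : H ∈ LatTens A B ↔
    ∃ (n : ℕ) (a : Fin (n + 1) → A) (b : Fin (n + 1) → B),
      H = ⋂ i, pureBox (a i) (b i) ∧
      Finset.univ.inf' Finset.univ_nonempty a = ⊥ ∧
      Finset.univ.inf' Finset.univ_nonempty b = ⊥ := by
  constructor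
  · rintro ⟨⟨n, a, b, rfl⟩, c, d, hcd⟩
    -- adjoining `c □ ⊥` and `⊥ □ d`, whose intersection is `c ⊠ d ⊇ H`, makes both meets `⊥`
    let a' : Fin (n + 1) ⊕ Bool → A := Sum.elim a fun t => cond t c ⊥
    let b' : Fin (n + 1) ⊕ Bool → B := Sum.elim b fun t => cond t ⊥ d
    have hH : ⋂ i, pureBox (a i) (b i) = ⋂ k, pureBox (a' k) (b' k) := by
      have hcd' : ⋂ t : Bool, pureBox (cond t c ⊥) (cond t ⊥ d) = pureTens c d := by
        rw [pureTens_eq_pureBox_inter_pureBox, Set.inter_eq_iInter]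
        congr! with t
        cases t <;> rfl
      rw [Set.iInter_sum]
      exact (Set.inter_eq_left.2 (hcd.trans hcd'.ge)).symm
    rw [hH]
    exact exists_fin_iInter_pureBox_eq (isGLB_range_of_apply_eq_bot (.inr false) rfl)
      (isGLB_range_of_apply_eq_bot (.inr true) rfl)
  · rintro ⟨n, a, b, rfl, ha, hb⟩
    rw [univ_inf'_eq_bot_iff] at ha hb
    exact ⟨⟨n, a, b, rfl⟩, _, _, iInter_pureBox_subset_pureTens ha hb⟩

theorem exists_iUnion_pureTens_eq_of_mem_latTens {H : Set (A × B)} (hH : H ∈ LatTens A B) :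
    ∃ (n : ℕ) (a : Fin n → A) (b : Fin n → B), H = ⋃ i, pureTens (a i) (b i) := by
  obtain ⟨n, a, b, rfl, ha, hb⟩ := mem_latTens_iff.1 hH
  rw [univ_inf'_eq_bot_iff] at ha hb
  rw [iInter_pureBox_eq_iUnion_pureTens ha hb]
  exact exists_fin_iUnion_pureTens_eq _ _

theorem boxCl_iUnion_pureTens_mem_latTens [Fintype ι] (a : ι → A) (b : ι → B) :
    BoxCl (⋃ i, pureTens (a i) (b i)) ∈ LatTens A B := by
  classical
  rw [boxCl_iUnion_pureTens, mem_latTens_iff]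
  exact exists_fin_iInter_pureBox_eq (isGLB_range_of_apply_eq_bot ∅ Finset.sup_empty)
    (isGLB_range_of_apply_eq_bot Finset.univ (by simp))

end OrderBot

/-- For lattices with zero: description of the elements of `A ⊠ B` as finite
intersections of pure boxes with meets of coordinates equal to zero, and as finite
unions of pure lattice tensors. -/
theorem stmt_8 {A B : Type*} [Lattice A] [OrderBot A] [Lattice B] [OrderBot B] :
    (∀ H : Set (A × B), H ∈ LatTens A B ↔
      ∃ (n : ℕ) (a : Fin (n + 1) → A) (b : Fin (n + 1) → B),
        H = ⋂ i, pureBox (a i) (b i) ∧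
        Finset.univ.inf' Finset.univ_nonempty a = ⊥ ∧
        Finset.univ.inf' Finset.univ_nonempty b = ⊥) ∧
    (∀ H ∈ LatTens A B, ∃ (n : ℕ) (a : Fin n → A) (b : Fin n → B),
      H = ⋃ i, pureTens (a i) (b i)) ∧
    ∀ (n : ℕ) (a : Fin n → A) (b : Fin n → B),
      BoxCl (⋃ i, pureTens (a i) (b i)) ∈ LatTens A B :=
  ⟨fun _ => mem_latTens_iff, fun _ => exists_iUnion_pureTens_eq_of_mem_latTens,
    fun _ => boxCl_iUnion_pureTens_mem_latTens⟩
end
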